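/- arXiv:2303.04746 — 2 statements merged into one kernel-verified Lean document; each statement's English description precedes it below -/
import Mathlib

section
/- Let Φ_1, …, Φ_K : ℝ^N → ℝ be convex functions and let H_1, …, H_K : ℝ → ℝ be concave differentiable functions. Suppose Slater's condition holds: there exist w' ∈ Ω and t' > 0 with Φ_k(w') < H_k(t') for all k = 1, …, K. Let (w*, t*) be feasible with t* > 0, i.e., w* ∈ Ω, t* > 0, and Φ_k(w*) ≤ H_k(t*) for all k. Then (w*, t*) minimizes t over the feasible set {(w, t) : w ∈ Ω, t ≥ 0, Φ_k(w) ≤ H_k(t) for all k = 1, …, K} if and only if there exist η_1, …, η_K ≥ 0 such that (1) Σ_{k=1}^K η_k H_k'(t*) = 1, (2) η_k (Φ_k(w*) − H_k(t*)) = 0 for all k = 1, …, K, and (3) w* minimizes Σ_{k=1}^K η_k Φ_k over Ω. -/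
open Finset Matrix

noncomputable section

attribute [local instance] Matrix.normedAddCommGroup Matrix.normedSpace

/-- Dot product of two real vectors indexed by a finite type. -/
def dotp {α : Type*} [Fintype α] (g w : α → ℝ) : ℝ := ∑ i, g i * w i

/-- The probability simplex Ω in ℝ^N. -/
def simplex (N : ℕ) : Set (Fin N → ℝ) := {w | (∑ i, w i) = 1 ∧ ∀ i, 0 ≤ w i}

/-- The subdifferential of a convex function `Φ : ℝ^N → ℝ` at `w`. -/
def subdiff {N : ℕ} (Φ : (Fin N → ℝ) → ℝ) (w : Fin N → ℝ) : Set (Fin N → ℝ) :=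
  {g | ∀ w', dotp g (w' - w) ≤ Φ w' - Φ w}

/-- The i-th standard basis vector of ℝ^N. -/
def stdBasis {N : ℕ} (i : Fin N) : Fin N → ℝ := fun j => if j = i then 1 else 0

/-- The information matrix `I(w) = Σ_i w_i z_i z_iᵀ`. -/
def infoMat {N q : ℕ} (z : Fin N → Fin q → ℝ) (w : Fin N → ℝ) :
    Matrix (Fin q) (Fin q) ℝ := ∑ i, w i • Matrix.vecMulVec (z i) (z i)

/-- The smallest eigenvalue of a (symmetric) real matrix `M`. -/
def lambdaMin {q : ℕ} (M : Matrix (Fin q) (Fin q) ℝ) : ℝ :=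
  sInf {r : ℝ | ∃ v : Fin q → ℝ, v ≠ 0 ∧ M.mulVec v = r • v}

/-!
The epigraph problem `min t` subject to `Φ_k(w) - H_k(t) ≤ 0` on `Ω × [0, ∞)` is a convex
program. Separating the open set `{u < 0} × {r < t*}` from the set of attainable
(constraint, objective) values gives a hyperplane, which Slater's point forces to be
non-vertical; normalising it yields multipliers `η ≥ 0` with
`t* ≤ t + Σ η_k (Φ_k(w) - H_k(t))` on `Ω × [0, ∞)`. Evaluating this at `(w*, t*)`, `(w, t*)` and
`(w*, t)` gives complementary slackness, minimality of `w*` and, as `t* > 0` is interior,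
stationarity `Σ η_k H_k'(t*) = 1`. Conversely, the tangent lines
`H_k(t) ≤ H_k(t*) + H_k'(t*) (t - t*)` of the concave `H_k` turn the three conditions into
`t* ≤ t` for every feasible `(w, t)`.
-/

theorem convex_simplex (N : ℕ) : Convex ℝ (simplex N) := by
  convert convex_stdSimplex ℝ (Fin N) using 1
  ext w
  exact and_comm

theorem ConcaveOn.le_add_deriv_mul_sub {S : Set ℝ} {f : ℝ → ℝ} (hf : ConcaveOn ℝ S f) {x y : ℝ}
    (hx : x ∈ S) (hy : y ∈ S) (hfx : DifferentiableAt ℝ f x) :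
    f y ≤ f x + deriv f x * (y - x) := by
  rcases lt_trichotomy y x with hyx | rfl | hxy
  · have h := hf.deriv_le_slope hy hx hyx hfx
    rw [slope_def_field, le_div_iff₀ (sub_pos.2 hyx)] at h
    linarith
  · simp
  · have h := hf.slope_le_deriv hx hy hxy hfx
    rw [slope_def_field, div_le_iff₀ (sub_pos.2 hxy)] at h
    linarith

theorem nonneg_of_forall_pos_sub_mul_le {a c d : ℝ} (h : ∀ s : ℝ, 0 < s → a - s * d ≤ c) :
    0 ≤ d := by
  by_contra! hd
  have hs := h ((|c - a| + 1) / -d) (div_pos (by positivity) (neg_pos.2 hd))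
  rw [div_mul_eq_mul_div, div_neg, mul_div_cancel_right₀ _ hd.ne] at hs
  linarith [le_abs_self (c - a)]

theorem LinearMap.apply_pi_prod_eq_sum {ι : Type*} [Fintype ι] [DecidableEq ι]
    (ℓ : (ι → ℝ) × ℝ →ₗ[ℝ] ℝ) (u : ι → ℝ) (r : ℝ) :
    ℓ (u, r) = ∑ k, ℓ (Pi.single k 1, 0) * u k + ℓ (0, 1) * r := by
  have hdecomp : ((u, r) : (ι → ℝ) × ℝ) =
      ∑ k, u k • ((Pi.single k 1 : ι → ℝ), (0 : ℝ)) + r • (0, 1) := by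
    ext <;> simp [Prod.fst_sum, Prod.snd_sum, Finset.sum_apply, Pi.single_apply]
  rw [hdecomp, map_add, map_sum, map_smul, smul_eq_mul, mul_comm r]
  congr 1
  exact Finset.sum_congr rfl fun k _ => by rw [map_smul, smul_eq_mul, mul_comm]

-- The set `𝒜` of attainable (constraint, objective) values in Boyd–Vandenberghe, §5.3.
def perturbationSet {E ι : Type*} (C : Set E) (f : E → ℝ) (g : ι → E → ℝ) :
    Set ((ι → ℝ) × ℝ) :=
  {q | ∃ x ∈ C, (∀ k, g k x ≤ q.1 k) ∧ f x ≤ q.2}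

theorem convex_perturbationSet {E ι : Type*} [AddCommGroup E] [Module ℝ E] {C : Set E}
    {f : E → ℝ} {g : ι → E → ℝ} (hf : ConvexOn ℝ C f) (hg : ∀ k, ConvexOn ℝ C (g k)) :
    Convex ℝ (perturbationSet C f g) := by
  rintro _ ⟨x, hx, hgx, hfx⟩ _ ⟨y, hy, hgy, hfy⟩ a b ha hb hab
  refine ⟨a • x + b • y, hf.1 hx hy ha hb hab, fun k => ?_, ?_⟩
  · calc g k (a • x + b • y) ≤ a * g k x + b * g k y := (hg k).2 hx hy ha hb hab
      _ ≤ _ := by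
        simp only [Prod.fst_add, Prod.smul_fst, Pi.add_apply, Pi.smul_apply, smul_eq_mul]
        gcongr
        exacts [hgx k, hgy k]
  · calc f (a • x + b • y) ≤ a * f x + b * f y := hf.2 hx hy ha hb hab
      _ ≤ _ := by simp only [Prod.snd_add, Prod.smul_snd, smul_eq_mul]; gcongr

theorem exists_lagrangeMultipliers_of_separation {E ι : Type*} [Fintype ι] {C : Set E}
    {f : E → ℝ} {g : ι → E → ℝ} {x₀ : E} (hx₀ : x₀ ∈ C) (hslater : ∀ k, g k x₀ < 0)
    {p c μ : ℝ} {η : ι → ℝ} (hne : (η, μ) ≠ 0)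
    (hbelow : ∀ (u : ι → ℝ) (r : ℝ), (∀ k, u k ≤ 0) → r ≤ p → ∑ k, η k * u k + μ * r ≤ c)
    (habove : ∀ x ∈ C, c ≤ ∑ k, η k * g k x + μ * f x) :
    ∃ η' : ι → ℝ, (∀ k, 0 ≤ η' k) ∧ ∀ x ∈ C, p ≤ f x + ∑ k, η' k * g k x := by
  classical
  have hη : ∀ k, 0 ≤ η k := fun k => nonneg_of_forall_pos_sub_mul_le (a := μ * p) fun s hs => by
    simpa [Pi.single_apply, mul_comm s, sub_eq_neg_add] using
      hbelow (Pi.single k (-s)) p (Pi.single_nonpos.2 (by linarith)) le_rfl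
  have hμ : 0 ≤ μ := nonneg_of_forall_pos_sub_mul_le (a := μ * p) fun s hs => by
    simpa [mul_sub, mul_comm s] using hbelow 0 (p - s) (fun _ => le_rfl) (by linarith)
  have hμp : μ * p ≤ c := by simpa using hbelow 0 p (fun _ => le_rfl) le_rfl
  -- Slater's point rules out a vertical separating hyperplane.
  have hμpos : 0 < μ := by
    refine hμ.lt_of_ne fun hμ0 => hne ?_
    subst hμ0
    have hterm : ∀ k ∈ univ, η k * g k x₀ ≤ 0 := fun k _ =>
      mul_nonpos_of_nonneg_of_nonpos (hη k) (hslater k).le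
    have hsum : ∑ k, η k * g k x₀ = 0 :=
      le_antisymm (sum_nonpos hterm) (by linarith [habove x₀ hx₀])
    have hzero := (sum_eq_zero_iff_of_nonpos hterm).1 hsum
    ext k
    · simpa [(hslater k).ne] using hzero k (mem_univ k)
    · rfl
  refine ⟨fun k => η k / μ, fun k => div_nonneg (hη k) hμ, fun x hx => ?_⟩
  have hscaled : μ * (f x + ∑ k, η k / μ * g k x) = ∑ k, η k * g k x + μ * f x := by
    rw [mul_add, mul_sum]
    field_simp
    ring
  exact le_of_mul_le_mul_left (by linarith [habove x hx]) hμpos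

theorem exists_lagrangeMultipliers_of_slater {E ι : Type*} [AddCommGroup E] [Module ℝ E]
    [Fintype ι] {C : Set E} {f : E → ℝ} {g : ι → E → ℝ} (hf : ConvexOn ℝ C f)
    (hg : ∀ k, ConvexOn ℝ C (g k)) {x₀ : E} (hx₀ : x₀ ∈ C) (hslater : ∀ k, g k x₀ < 0) {p : ℝ}
    (hp : ∀ x ∈ C, (∀ k, g k x ≤ 0) → p ≤ f x) :
    ∃ η : ι → ℝ, (∀ k, 0 ≤ η k) ∧ ∀ x ∈ C, p ≤ f x + ∑ k, η k * g k x := by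
  classical
  set B : Set ((ι → ℝ) × ℝ) := (Set.univ.pi fun _ => Set.Iio 0) ×ˢ Set.Iio p
  have hBconvex : Convex ℝ B := (convex_pi fun _ _ => convex_Iio 0).prod (convex_Iio p)
  have hBopen : IsOpen B := (isOpen_set_pi Set.finite_univ fun _ _ => isOpen_Iio).prod isOpen_Iio
  have hdisj : Disjoint B (perturbationSet C f g) := by
    refine Set.disjoint_left.2 fun q ⟨hu, hr⟩ ⟨x, hx, hgx, hfx⟩ => ?_
    have := hp x hx fun k => (hgx k).trans (hu k (Set.mem_univ k)).le
    exact (lt_irrefl p) (by linarith [Set.mem_Iio.1 hr])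
  obtain ⟨ℓ, c, hℓB, hℓA⟩ :=
    geometric_hahn_banach_open hBconvex hBopen (convex_perturbationSet hf hg) hdisj
  have hℓ (u : ι → ℝ) (r : ℝ) : ℓ (u, r) = ∑ k, ℓ (Pi.single k 1, 0) * u k + ℓ (0, 1) * r :=
    LinearMap.apply_pi_prod_eq_sum ℓ.toLinearMap u r
  refine exists_lagrangeMultipliers_of_separation hx₀ hslater (c := c)
    (η := fun k => ℓ (Pi.single k 1, 0)) (μ := ℓ (0, 1)) ?_ (fun u r hu hr => ?_)
    (fun x hx => ?_)
  · intro hzero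
    obtain ⟨hη0, hμ0⟩ := Prod.mk_eq_zero.1 hzero
    have hη0' (k : ι) : ℓ (Pi.single k 1, 0) = 0 := congrFun hη0 k
    have hℓ0 (u : ι → ℝ) (r : ℝ) : ℓ (u, r) = 0 := by
      rw [hℓ]
      simp [hη0', hμ0]
    have hb := hℓB (fun _ => -1, p - 1) ⟨fun _ _ => by norm_num, by simp⟩
    have ha := hℓA (fun k => g k x₀, f x₀) ⟨x₀, hx₀, fun _ => le_rfl, le_rfl⟩
    rw [hℓ0] at hb ha
    linarith
  · have hclosure : closure B ⊆ {q | ℓ q ≤ c} :=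
      closure_minimal (fun q hq => (hℓB q hq).le) (isClosed_le ℓ.continuous continuous_const)
    rw [closure_prod_eq, closure_pi_set, closure_Iio, closure_Iio] at hclosure
    have hur := hclosure (show (u, r) ∈ _ from ⟨fun k _ => hu k, hr⟩)
    rwa [Set.mem_ofPred_eq, hℓ] at hur
  · have hx := hℓA (fun k => g k x, f x) ⟨x, hx, fun _ => le_rfl, le_rfl⟩
    rwa [hℓ] at hx

def lagrangian {E ι : Type*} [Fintype ι] (Φ : ι → E → ℝ) (H : ι → ℝ → ℝ) (η : ι → ℝ) (w : E)
    (t : ℝ) : ℝ :=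
  t + ∑ k, η k * (Φ k w - H k t)

section EpigraphProgram

variable {E ι : Type*} [Fintype ι] {Ω : Set E} {Φ : ι → E → ℝ} {H : ι → ℝ → ℝ} {η : ι → ℝ}
  {ws : E} {ts : ℝ}

theorem exists_lagrangian_bound_of_optimal [AddCommGroup E] [Module ℝ E] (hΩ : Convex ℝ Ω)
    (hΦ : ∀ k, ConvexOn ℝ Ω (Φ k)) (hH : ∀ k, ConcaveOn ℝ (Set.Ici 0) (H k)) {w' : E} {t' : ℝ}
    (hw' : w' ∈ Ω) (ht' : 0 ≤ t') (hslater : ∀ k, Φ k w' < H k t')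
    (hopt : ∀ w t, w ∈ Ω → 0 ≤ t → (∀ k, Φ k w ≤ H k t) → ts ≤ t) :
    ∃ η : ι → ℝ, (∀ k, 0 ≤ η k) ∧
      ∀ w ∈ Ω, ∀ t, 0 ≤ t → ts ≤ lagrangian Φ H η w t := by
  have hC : Convex ℝ (Ω ×ˢ Set.Ici (0 : ℝ)) := hΩ.prod (convex_Ici 0)
  have hg (k : ι) : ConvexOn ℝ (Ω ×ˢ Set.Ici 0) fun q : E × ℝ => Φ k q.1 - H k q.2 := by
    have hΦ' := ((hΦ k).comp_linearMap (LinearMap.fst ℝ E ℝ)).subset (fun _ hq => hq.1) hC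
    have hH' := ((hH k).neg.comp_linearMap (LinearMap.snd ℝ E ℝ)).subset (fun _ hq => hq.2) hC
    exact (hΦ'.add hH').congr fun q _ => by simp [sub_eq_add_neg]
  obtain ⟨η, hη, hL⟩ := exists_lagrangeMultipliers_of_slater ((LinearMap.snd ℝ E ℝ).convexOn hC)
    hg (x₀ := (w', t')) ⟨hw', ht'⟩ (fun k => sub_neg.2 (hslater k)) (p := ts)
    fun q hq hfeas => hopt q.1 q.2 hq.1 hq.2 fun k => sub_nonpos.1 (hfeas k)
  exact ⟨η, hη, fun w hw t ht => hL (w, t) ⟨hw, ht⟩⟩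

theorem mul_sub_eq_zero_of_lagrangian_bound (hη : ∀ k, 0 ≤ η k) (hws : ws ∈ Ω) (hts : 0 ≤ ts)
    (hfeas : ∀ k, Φ k ws ≤ H k ts)
    (hL : ∀ w ∈ Ω, ∀ t, 0 ≤ t → ts ≤ lagrangian Φ H η w t) (k : ι) :
    η k * (Φ k ws - H k ts) = 0 := by
  have hterm : ∀ j ∈ univ, η j * (Φ j ws - H j ts) ≤ 0 := fun j _ =>
    mul_nonpos_of_nonneg_of_nonpos (hη j) (sub_nonpos.2 (hfeas j))
  have hsum : ∑ j, η j * (Φ j ws - H j ts) = 0 :=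
    le_antisymm (sum_nonpos hterm) ((le_add_iff_nonneg_right ts).1 (hL ws hws ts hts))
  exact (sum_eq_zero_iff_of_nonpos hterm).1 hsum k (mem_univ k)

theorem sum_mul_deriv_eq_one_of_lagrangian_bound (hH : ∀ k, DifferentiableAt ℝ (H k) ts)
    (hws : ws ∈ Ω) (hts : 0 < ts) (hslack : ∀ k, η k * (Φ k ws - H k ts) = 0)
    (hL : ∀ w ∈ Ω, ∀ t, 0 ≤ t → ts ≤ lagrangian Φ H η w t) :
    ∑ k, η k * deriv (H k) ts = 1 := by
  have hmin : IsLocalMin (fun t => t - ∑ k, η k * H k t) ts := by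
    filter_upwards [Ioi_mem_nhds hts] with t ht
    have hsum := sum_eq_zero fun k (_ : k ∈ univ) => hslack k
    have hbound := hL ws hws t (le_of_lt ht)
    simp only [lagrangian, mul_sub, sum_sub_distrib] at hsum hbound ⊢
    linarith
  have hderiv : HasDerivAt (fun t => t - ∑ k, η k * H k t) (1 - ∑ k, η k * deriv (H k) ts) ts :=
    (hasDerivAt_id ts).sub (HasDerivAt.fun_sum fun k _ => ((hH k).hasDerivAt.const_mul (η k)))
  linarith [hmin.hasDerivAt_eq_zero hderiv]

theorem sum_mul_le_of_lagrangian_bound (hts : 0 ≤ ts) (hslack : ∀ k, η k * (Φ k ws - H k ts) = 0)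
    (hL : ∀ w ∈ Ω, ∀ t, 0 ≤ t → ts ≤ lagrangian Φ H η w t) {w : E} (hw : w ∈ Ω) :
    ∑ k, η k * Φ k ws ≤ ∑ k, η k * Φ k w := by
  have hsum := sum_eq_zero fun k (_ : k ∈ univ) => hslack k
  have hbound := hL w hw ts hts
  simp only [lagrangian, mul_sub, sum_sub_distrib] at hsum hbound
  linarith

theorem le_of_kkt (hH : ∀ k, ConcaveOn ℝ Set.univ (H k)) (hHd : ∀ k, DifferentiableAt ℝ (H k) ts)
    (hη : ∀ k, 0 ≤ η k) (hderiv : ∑ k, η k * deriv (H k) ts = 1)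
    (hslack : ∀ k, η k * (Φ k ws - H k ts) = 0)
    (hmin : ∀ w ∈ Ω, ∑ k, η k * Φ k ws ≤ ∑ k, η k * Φ k w) {w : E} {t : ℝ} (hw : w ∈ Ω)
    (hfeas : ∀ k, Φ k w ≤ H k t) : ts ≤ t := by
  have hsum := sum_eq_zero fun k (_ : k ∈ univ) => hslack k
  have htangent : ∑ k, η k * H k t ≤ ∑ k, η k * (H k ts + deriv (H k) ts * (t - ts)) :=
    sum_le_sum fun k _ => mul_le_mul_of_nonneg_left
      ((hH k).le_add_deriv_mul_sub (Set.mem_univ ts) (Set.mem_univ t) (hHd k)) (hη k)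
  have hfeas' : ∑ k, η k * Φ k w ≤ ∑ k, η k * H k t :=
    sum_le_sum fun k _ => mul_le_mul_of_nonneg_left (hfeas k) (hη k)
  simp only [mul_add, sum_add_distrib, ← mul_assoc, ← sum_mul, hderiv, one_mul] at htangent
  simp only [mul_sub, sum_sub_distrib] at hsum
  linarith [hmin w hw]

end EpigraphProgram

/-- KKT characterization for the maximin design problem in its epigraph form, with
concave differentiable right-hand sides `H_k(t)` (in the paper, `H_k(t) = h_k(1/t)`). -/
theorem stmt8 {N K : ℕ}
    (Φ : Fin K → (Fin N → ℝ) → ℝ) (hΦ : ∀ k, ConvexOn ℝ Set.univ (Φ k))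
    (H : Fin K → ℝ → ℝ)
    (hHconc : ∀ k, ConcaveOn ℝ Set.univ (H k))
    (hHdiff : ∀ k, Differentiable ℝ (H k))
    (w' : Fin N → ℝ) (t' : ℝ) (hw' : w' ∈ simplex N) (ht' : 0 < t')
    (hslater : ∀ k, Φ k w' < H k t')
    (ws : Fin N → ℝ) (ts : ℝ) (hws : ws ∈ simplex N) (hts : 0 < ts)
    (hfeas : ∀ k, Φ k ws ≤ H k ts) :
    (∀ w : Fin N → ℝ, ∀ t : ℝ,
        w ∈ simplex N → 0 ≤ t → (∀ k, Φ k w ≤ H k t) → ts ≤ t) ↔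
      ∃ η : Fin K → ℝ, (∀ k, 0 ≤ η k) ∧
        (∑ k, η k * deriv (H k) ts) = 1 ∧
        (∀ k, η k * (Φ k ws - H k ts) = 0) ∧
        ∀ w ∈ simplex N, (∑ k, η k * Φ k ws) ≤ ∑ k, η k * Φ k w := by
  constructor
  · intro hopt
    obtain ⟨η, hη, hL⟩ := exists_lagrangian_bound_of_optimal (convex_simplex N)
      (fun k => (hΦ k).subset (Set.subset_univ _) (convex_simplex N))
      (fun k => (hHconc k).subset (Set.subset_univ _) (convex_Ici 0)) hw' ht'.le hslater hopt
    have hslack := mul_sub_eq_zero_of_lagrangian_bound hη hws hts.le hfeas hL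
    exact ⟨η, hη, sum_mul_deriv_eq_one_of_lagrangian_bound (fun k => hHdiff k ts) hws hts hslack hL,
      hslack, fun w hw => sum_mul_le_of_lagrangian_bound hts.le hslack hL hw⟩
  · rintro ⟨η, hη, hderiv, hslack, hmin⟩ w t hw - hfeas'
    exact le_of_kkt hHconc (fun k => hHdiff k ts) hη hderiv hslack hmin hw hfeas'
end
end

section
/- Let z_{1,1}, …, z_{1,N} ∈ ℝ^{q_1}, define I_1(w) = Σ_{i=1}^N w_i z_{1,i} z_{1,i}ᵀ and Φ_1(w) = −λ_min(I_1(w)) (a convex function of w). For k = 2, …, K, let z_{k,1}, …, z_{k,N} ∈ ℝ^{q_k}, I_k(w) = Σ_i w_i z_{k,i} z_{k,i}ᵀ, and Φ_k(w) = φ_k(I_k(w)) with φ_k convex on q_k×q_k matrices and differentiable at I_k(w*). Let w* ∈ Ω and η_2, …, η_K ≥ 0. Then w* minimizes Φ_1 + Σ_{k=2}^K η_k Φ_k over Ω if and only if there exists g ∈ ∂Φ_1(w*) such that gᵀ(w* − e_i) + Σ_{k=2}^K η_k d_k(i, w*) ≤ 0 for all i = 1, …, N, where d_k(i, w*) = trace(∇φ_k(I_k(w*))ᵀ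 (I_k(w*) − z_{k,i} z_{k,i}ᵀ)). -/
/-!
Write `Ψ(w) = Σ_k η_k φ_k(I_k(w))` and let `ℓ` be its derivative at `w*`. The function
`Φ₁ = -λ_min ∘ I₁` is convex, because `λ_min` is concave on symmetric matrices: at an
eigenvector `v` of `λ_min(aA + bB)` one has `λ_min(aA + bB) |v|² = a vᵀAv + b vᵀBv`, and
`λ_min(M) |v|² ≤ vᵀMv` always. As `Φ₁` is convex and `Ψ` is convex and differentiable at
`w*`, the point `w*` minimises `Φ₁ + Ψ` over `Ω` iff it minimises the partially linearised
`Φ₁ + ℓ` over `Ω`. Separating the open strict epigraph of `Φ₁ + ℓ` from `Ω × (-∞, min]` by a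
hyperplane, which cannot be vertical, produces a subgradient `g` of `Φ₁` at `w*` with
`(g + ℓ)(w - w*) ≥ 0` on `Ω`. Since `Ω` is the convex hull of the `e_i`, it suffices to test
`w = e_i`, and `ℓ(w* - e_i) = Σ_k η_k d_k(i, w*)`.
-/

open Finset Matrix

noncomputable section

attribute [local instance] Matrix.normedAddCommGroup Matrix.normedSpace

namespace Matrix

variable {q : ℕ}

theorem setOf_eigenvalue_eq_spectrum (M : Matrix (Fin q) (Fin q) ℝ) :
    {r : ℝ | ∃ v : Fin q → ℝ, v ≠ 0 ∧ M.mulVec v = r • v} = spectrum ℝ M := by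
  ext r
  rw [← spectrum_toLin', ← Module.End.hasEigenvalue_iff_mem_spectrum,
    Module.End.hasEigenvalue_iff, Submodule.ne_bot_iff]
  simp [and_comm]

theorem lambdaMin_eq_sInf_spectrum (M : Matrix (Fin q) (Fin q) ℝ) :
    lambdaMin M = sInf (spectrum ℝ M) := by
  rw [lambdaMin, setOf_eigenvalue_eq_spectrum]

namespace IsHermitian

variable {M : Matrix (Fin q) (Fin q) ℝ}

theorem lambdaMin_le (hM : M.IsHermitian) {r : ℝ} (hr : r ∈ spectrum ℝ M) :
    lambdaMin M ≤ r := by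
  rw [lambdaMin_eq_sInf_spectrum]
  exact csInf_le (hM.spectrum_real_eq_range_eigenvalues ▸ (Set.finite_range _).bddBelow) hr

theorem lambdaMin_mem_spectrum [NeZero q] (hM : M.IsHermitian) :
    lambdaMin M ∈ spectrum ℝ M := by
  rw [lambdaMin_eq_sInf_spectrum, hM.spectrum_real_eq_range_eigenvalues]
  exact (Set.range_nonempty _).csInf_mem (Set.finite_range _)

theorem posSemidef_sub_lambdaMin (hM : M.IsHermitian) :
    (M - algebraMap ℝ _ (lambdaMin M)).PosSemidef := by
  have hsub : (M - algebraMap ℝ _ (lambdaMin M)).IsHermitian :=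
    hM.sub (isHermitian_iff_isSelfAdjoint.2 (.algebraMap _ (.all _)))
  rw [hsub.posSemidef_iff_eigenvalues_nonneg]
  intro i
  obtain ⟨r, hr, _, rfl, hri⟩ := (spectrum.sub_singleton_eq M (lambdaMin M)).symm ▸
    hsub.eigenvalues_mem_spectrum_real i
  simpa [← hri] using hM.lambdaMin_le hr

theorem lambdaMin_mul_dotProduct_self_le (hM : M.IsHermitian) (v : Fin q → ℝ) :
    lambdaMin M * (v ⬝ᵥ v) ≤ v ⬝ᵥ M *ᵥ v := by
  have := hM.posSemidef_sub_lambdaMin.dotProduct_mulVec_nonneg v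
  simpa [sub_mulVec, Algebra.algebraMap_eq_smul_one, smul_mulVec, dotProduct_sub] using this

theorem exists_mulVec_eq_lambdaMin_smul [NeZero q] (hM : M.IsHermitian) :
    ∃ v ≠ 0, M *ᵥ v = lambdaMin M • v := by
  simpa [← setOf_eigenvalue_eq_spectrum] using hM.lambdaMin_mem_spectrum

end IsHermitian

theorem concaveOn_lambdaMin :
    ConcaveOn ℝ {M : Matrix (Fin q) (Fin q) ℝ | M.IsHermitian} lambdaMin := by
  refine ⟨(selfAdjoint.submodule ℝ (Matrix (Fin q) (Fin q) ℝ)).convex,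
    fun A hA B hB a b ha hb hab => ?_⟩
  rcases Nat.eq_zero_or_pos q with rfl | hq
  · simp [lambdaMin_eq_sInf_spectrum]
  have : NeZero q := ⟨hq.ne'⟩
  obtain ⟨v, hv, hCv⟩ :=
    ((hA.smul (.all a)).add (hB.smul (.all b))).exists_mulVec_eq_lambdaMin_smul
  have hvv : 0 < v ⬝ᵥ v := by simpa using dotProduct_self_star_pos_iff.2 hv
  refine le_of_mul_le_mul_right ?_ hvv
  calc (a • lambdaMin A + b • lambdaMin B) * (v ⬝ᵥ v)
      = a * (lambdaMin A * (v ⬝ᵥ v)) + b * (lambdaMin B * (v ⬝ᵥ v)) := by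
        simp only [smul_eq_mul]
        ring
    _ ≤ a * (v ⬝ᵥ A *ᵥ v) + b * (v ⬝ᵥ B *ᵥ v) := by
        gcongr
        exacts [hA.lambdaMin_mul_dotProduct_self_le v, hB.lambdaMin_mul_dotProduct_self_le v]
    _ = v ⬝ᵥ (a • A + b • B) *ᵥ v := by simp [add_mulVec, smul_mulVec, dotProduct_add]
    _ = lambdaMin (a • A + b • B) * (v ⬝ᵥ v) := by rw [hCv, dotProduct_smul, smul_eq_mul]

end Matrix

section ConvexAnalysis

open Set

theorem convexOn_finset_sum {E ι : Type*} [AddCommGroup E] [Module ℝ E] {s : Set E}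
    {t : Finset ι} {f : ι → E → ℝ} (hs : Convex ℝ s) (h : ∀ i ∈ t, ConvexOn ℝ s (f i)) :
    ConvexOn ℝ s fun x => ∑ i ∈ t, f i x := by
  classical
  induction t using Finset.induction_on with
  | empty => simpa using convexOn_const 0 hs
  | insert i t hi ih =>
    simp_rw [Finset.sum_insert hi]
    exact (h i (mem_insert_self i t)).add (ih fun j hj => h j (mem_insert_of_mem hj))

theorem ConvexOn.exists_subgradient_of_isMinOn {E : Type*} [TopologicalSpace E]
    [AddCommGroup E] [Module ℝ E] [IsTopologicalAddGroup E] [ContinuousSMul ℝ E]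
    {f : E → ℝ} {s : Set E} {x : E} (hf : ConvexOn ℝ univ f) (hfc : Continuous f)
    (hs : Convex ℝ s) (hx : x ∈ s) (hmin : IsMinOn f s x) :
    ∃ g : E →L[ℝ] ℝ, (∀ y, g (y - x) ≤ f y - f x) ∧ ∀ y ∈ s, 0 ≤ g (y - x) := by
  set epi : Set (E × ℝ) := {p | f p.1 < p.2}
  have hepi_open : IsOpen epi := isOpen_lt (hfc.comp continuous_fst) continuous_snd
  have hepi_conv : Convex ℝ epi := by
    have hfst : ConvexOn ℝ univ (f ∘ LinearMap.fst ℝ E ℝ) := hf.comp_linearMap _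
    have : ConvexOn ℝ univ fun p : E × ℝ => f p.1 - p.2 :=
      hfst.sub ((LinearMap.snd ℝ E ℝ).concaveOn convex_univ)
    simpa [epi] using this.convex_lt 0
  have hdisj : Disjoint epi (s ×ˢ Iic (f x)) := by
    rw [Set.disjoint_left]
    rintro ⟨y, r⟩ (hlt : f y < r) ⟨hy, hr : r ≤ f x⟩
    exact (hlt.trans_le hr).not_ge (hmin hy :)
  obtain ⟨Λ, u, hΛepi, hΛs⟩ :=
    geometric_hahn_banach_open hepi_conv hepi_open (hs.prod (convex_Iic _)) hdisj
  set a := Λ.comp (ContinuousLinearMap.inl ℝ E ℝ)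
  set c := Λ (0, 1)
  have hΛ : ∀ y r, Λ (y, r) = a y + r * c := fun y r => by
    rw [show (y, r) = (y, 0) + r • ((0 : E), (1 : ℝ)) by simp, map_add, map_smul, smul_eq_mul]
    rfl
  have hlower : ∀ y ∈ s, u ≤ a y + f x * c := fun y hy =>
    hΛ y _ ▸ hΛs _ ⟨hy, mem_Iic.2 le_rfl⟩
  have hc : c < 0 := by
    have := hΛ x _ ▸ hΛepi (x, f x + 1) (by simp [epi])
    linarith [hlower x hx]
  have hupper : ∀ y, a y + f y * c ≤ u := fun y => by
    by_contra! h
    -- a point of `epi` above `(y, f y)` on which `Λ` takes the value `u`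
    have := hΛ y _ ▸ hΛepi (y, f y + (a y + f y * c - u) / -c)
      (by simpa [epi] using div_pos (sub_pos.2 h) (neg_pos.2 hc))
    have hval : (f y + (a y + f y * c - u) / -c) * c = u - a y := by
      rw [add_mul, div_neg, neg_mul, div_mul_cancel₀ _ hc.ne]
      ring
    linarith
  refine ⟨(-c)⁻¹ • a, fun y => ?_, fun y hy => ?_⟩
  · rw [_root_.smul_apply, smul_eq_mul, inv_mul_le_iff₀ (neg_pos.2 hc), map_sub]
    nlinarith [hupper y, hlower x hx]
  · rw [_root_.smul_apply, smul_eq_mul, map_sub]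
    exact mul_nonneg (inv_nonneg.2 (neg_nonneg.2 hc.le)) (by linarith [hupper x, hlower y hy])

variable {E : Type*} [NormedAddCommGroup E] [NormedSpace ℝ E] {f ψ : E → ℝ}
  {ℓ : E →L[ℝ] ℝ} {s : Set E} {x y : E}

theorem ConvexOn.le_sub_of_hasFDerivAt (hf : ConvexOn ℝ s f) (hx : x ∈ s) (hy : y ∈ s)
    (hℓ : HasFDerivAt f ℓ x) : ℓ (y - x) ≤ f y - f x := by
  set l := AffineMap.lineMap (k := ℝ) x y
  have hline : ConvexOn ℝ (l ⁻¹' s) (f ∘ l) := hf.comp_affineMap l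
  have hderiv : HasDerivAt (f ∘ l) (ℓ (y - x)) 0 :=
    (by simpa [l] using hℓ : HasFDerivAt f ℓ (l 0)).comp_hasDerivAt 0
      AffineMap.hasDerivAt_lineMap
  simpa [slope, l] using
    hline.le_slope_of_hasDerivAt (by simpa [l]) (by simpa [l]) zero_lt_one hderiv

theorem ConvexOn.isMinOn_add_of_hasFDerivAt (hf : ConvexOn ℝ s f) (hx : x ∈ s)
    (hψ : HasFDerivAt ψ ℓ x) (hmin : IsMinOn (f + ψ) s x) : IsMinOn (f + ⇑ℓ) s x := by
  intro y hy
  set l := AffineMap.lineMap (k := ℝ) x y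
  -- `h t ≥ (f + ψ) (l t) - f x` by convexity of `f`, so `h` is minimal at `t = 0`
  set h : ℝ → ℝ := fun t => t * (f y - f x) + ψ (l t)
  have hmin_h : IsMinOn h (Icc 0 1) 0 := by
    intro t ht
    have hconv : f (l t) ≤ (1 - t) * f x + t * f y := by
      simpa [l, AffineMap.lineMap_apply_module] using
        hf.2 hx hy (sub_nonneg.2 ht.2) ht.1 (sub_add_cancel 1 t)
    have hmin_t : f x + ψ x ≤ f (l t) + ψ (l t) := hmin (hf.1.lineMap_mem hx hy ht)
    show 0 * (f y - f x) + ψ (l 0) ≤ t * (f y - f x) + ψ (l t)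
    rw [zero_mul, zero_add, AffineMap.lineMap_apply_zero]
    linarith
  have hderiv : HasDerivAt h (f y - f x + ℓ (y - x)) 0 := by
    have hψl : HasDerivAt (ψ ∘ l) (ℓ (y - x)) 0 :=
      (by simpa [l] using hψ : HasFDerivAt ψ ℓ (l 0)).comp_hasDerivAt 0
        AffineMap.hasDerivAt_lineMap
    simpa using ((hasDerivAt_id (0 : ℝ)).mul_const (f y - f x)).fun_add hψl
  have := hmin_h.localize.hasFDerivWithinAt_nonneg hderiv.hasFDerivAt.hasFDerivWithinAt
    (y := 1) (mem_posTangentConeAt_of_segment_subset (by simp [segment_eq_Icc]))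
  show f x + ℓ x ≤ f y + ℓ y
  simp only [ContinuousLinearMap.toSpanSingleton_apply, one_smul, map_sub] at this
  linarith

theorem isMinOn_add_iff_exists_subgradient (hf : ConvexOn ℝ univ f) (hfc : Continuous f)
    (hψ : ConvexOn ℝ s ψ) (hψx : HasFDerivAt ψ ℓ x) (hx : x ∈ s) :
    IsMinOn (f + ψ) s x ↔
      ∃ g : E →L[ℝ] ℝ, (∀ y, g (y - x) ≤ f y - f x) ∧ ∀ y ∈ s, 0 ≤ (g + ℓ) (y - x) := by
  constructor
  · intro hmin
    have hlin : IsMinOn (f + ⇑ℓ) s x :=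
      (hf.subset (subset_univ s) hψ.1).isMinOn_add_of_hasFDerivAt hx hψx hmin
    obtain ⟨a, ha, hnormal⟩ :=
      (hf.add (ℓ.toLinearMap.convexOn convex_univ)).exists_subgradient_of_isMinOn
        (hfc.add ℓ.continuous) hψ.1 hx hlin
    refine ⟨a - ℓ, fun y => ?_, fun y hy => by simpa using hnormal y hy⟩
    have := ha y
    simp only [Pi.add_apply, ContinuousLinearMap.coe_coe, _root_.sub_apply, map_sub] at this ⊢
    linarith
  · rintro ⟨g, hg, hnormal⟩ y hy
    have hψy := hψ.le_sub_of_hasFDerivAt hx hy hψx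
    have hgy := hg y
    have hgℓ := hnormal y hy
    show f x + ψ x ≤ f y + ψ y
    rw [_root_.add_apply] at hgℓ
    linarith

end ConvexAnalysis

section InformationMatrix

variable {N q : ℕ}

def infoMatLinear (z : Fin N → Fin q → ℝ) : (Fin N → ℝ) →ₗ[ℝ] Matrix (Fin q) (Fin q) ℝ :=
  Fintype.linearCombination ℝ fun i => vecMulVec (z i) (z i)

theorem coe_infoMatLinear (z : Fin N → Fin q → ℝ) : ⇑(infoMatLinear z) = infoMat z := by
  ext w : 1
  simp [infoMatLinear, infoMat, Fintype.linearCombination_apply]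

theorem infoMat_stdBasis (z : Fin N → Fin q → ℝ) (i : Fin N) :
    infoMat z (stdBasis i) = vecMulVec (z i) (z i) := by
  simp [infoMat, _root_.stdBasis, ite_smul]

theorem isHermitian_infoMat (z : Fin N → Fin q → ℝ) (w : Fin N → ℝ) :
    (infoMat z w).IsHermitian := by
  simp [IsHermitian, conjTranspose_eq_transpose_of_trivial, infoMat, transpose_sum,
    transpose_vecMulVec]

theorem convexOn_neg_lambdaMin_infoMat (z : Fin N → Fin q → ℝ) :
    ConvexOn ℝ Set.univ fun w => -lambdaMin (infoMat z w) := by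
  have := (concaveOn_lambdaMin.comp_linearMap (infoMatLinear z)).neg
  rwa [coe_infoMatLinear, show infoMat z ⁻¹' {M | M.IsHermitian} = Set.univ from
    Set.eq_univ_of_forall (isHermitian_infoMat z)] at this

end InformationMatrix

section Penalty

variable {N m : ℕ} {q : Fin m → ℕ} (z : ∀ k, Fin N → Fin (q k) → ℝ) (η : Fin m → ℝ)

theorem convexOn_sum_mul_comp_infoMat {φ : ∀ k, Matrix (Fin (q k)) (Fin (q k)) ℝ → ℝ}
    (hφ : ∀ k, ConvexOn ℝ Set.univ (φ k)) (hη : ∀ k, 0 ≤ η k) :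
    ConvexOn ℝ Set.univ fun w => ∑ k, η k * φ k (infoMat (z k) w) := by
  refine convexOn_finset_sum convex_univ fun k _ => ?_
  simpa [coe_infoMatLinear] using ((hφ k).comp_linearMap (infoMatLinear (z k))).smul (hη k)

theorem hasFDerivAt_sum_mul_comp_infoMat {φ : ∀ k, Matrix (Fin (q k)) (Fin (q k)) ℝ → ℝ}
    {L : ∀ k, Matrix (Fin (q k)) (Fin (q k)) ℝ →L[ℝ] ℝ} {w : Fin N → ℝ}
    (hφ : ∀ k, HasFDerivAt (φ k) (L k) (infoMat (z k) w)) :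
    HasFDerivAt (fun w => ∑ k, η k * φ k (infoMat (z k) w))
      (∑ k, η k • (L k).comp (infoMatLinear (z k)).toContinuousLinearMap) w :=
  HasFDerivAt.fun_sum fun k _ =>
    ((hφ k).comp w (infoMatLinear (z k)).toContinuousLinearMap.hasFDerivAt).const_mul (η k)

theorem sum_smul_comp_infoMat_apply_stdBasis_sub
    (L : ∀ k, Matrix (Fin (q k)) (Fin (q k)) ℝ →L[ℝ] ℝ) (w : Fin N → ℝ) (i : Fin N) :
    (∑ k, η k • (L k).comp (infoMatLinear (z k)).toContinuousLinearMap) (stdBasis i - w) =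
      -∑ k, η k * L k (infoMat (z k) w - vecMulVec (z k i) (z k i)) := by
  simp [map_sub, coe_infoMatLinear, infoMat_stdBasis, mul_sub]

end Penalty

theorem simplex_eq_convexHull (N : ℕ) :
    simplex N = convexHull ℝ (Set.range _root_.stdBasis) := by
  rw [show (_root_.stdBasis : Fin N → Fin N → ℝ) = fun i j => if i = j then 1 else 0 by
    ext i j; simp [_root_.stdBasis, eq_comm], convexHull_basis_eq_stdSimplex]
  ext w
  simp [simplex, stdSimplex, and_comm]

theorem forall_mem_simplex_nonneg_iff {N : ℕ} (a : (Fin N → ℝ) →ₗ[ℝ] ℝ) (x : Fin N → ℝ) :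
    (∀ y ∈ simplex N, 0 ≤ a (y - x)) ↔ ∀ i, 0 ≤ a (_root_.stdBasis i - x) := by
  have hconv : Convex ℝ {y | 0 ≤ a (y - x)} := by
    simpa only [map_sub, sub_nonneg] using convex_halfSpace_ge a.isLinear (a x)
  have := hconv.convexHull_subset_iff (s := Set.range _root_.stdBasis)
  rwa [← simplex_eq_convexHull, Set.range_subset_iff] at this

theorem exists_continuousLinearMap_iff_exists_dotp {N : ℕ} {P : ((Fin N → ℝ) → ℝ) → Prop} :
    (∃ g : (Fin N → ℝ) →L[ℝ] ℝ, P g) ↔ ∃ g : Fin N → ℝ, P (dotp g) := by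
  constructor
  · rintro ⟨g, hg⟩
    refine ⟨(dotProductEquiv ℝ (Fin N)).symm g, ?_⟩
    convert hg using 1
    ext y
    exact congr($((dotProductEquiv ℝ (Fin N)).apply_symm_apply g.toLinearMap) y)
  · rintro ⟨g, hg⟩
    exact ⟨LinearMap.toContinuousLinearMap (dotProductEquiv ℝ (Fin N) g), hg⟩

theorem stmt12_general {N q₁ m : ℕ}
    (z₁ : Fin N → Fin q₁ → ℝ)
    (q : Fin m → ℕ)
    (z : ∀ k : Fin m, Fin N → Fin (q k) → ℝ)
    (φ : ∀ k : Fin m, Matrix (Fin (q k)) (Fin (q k)) ℝ → ℝ)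
    (hφconv : ∀ k, ConvexOn ℝ Set.univ (φ k))
    (ws : Fin N → ℝ) (hws : ws ∈ simplex N)
    (L : ∀ k : Fin m, Matrix (Fin (q k)) (Fin (q k)) ℝ →L[ℝ] ℝ)
    (hdiff : ∀ k, HasFDerivAt (φ k) (L k) (infoMat (z k) ws))
    (G : ∀ k : Fin m, Matrix (Fin (q k)) (Fin (q k)) ℝ)
    (hG : ∀ k, ∀ H : Matrix (Fin (q k)) (Fin (q k)) ℝ, L k H = Matrix.trace ((G k)ᵀ * H))
    (η : Fin m → ℝ) (hη : ∀ k, 0 ≤ η k) :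
    (∀ w ∈ simplex N,
        -(lambdaMin (infoMat z₁ ws)) + (∑ k, η k * φ k (infoMat (z k) ws)) ≤
          -(lambdaMin (infoMat z₁ w)) + ∑ k, η k * φ k (infoMat (z k) w)) ↔
      ∃ g ∈ subdiff (fun w => -(lambdaMin (infoMat z₁ w))) ws,
        ∀ i : Fin N,
          dotp g (ws - stdBasis i) +
            (∑ k, η k * Matrix.trace ((G k)ᵀ *
              (infoMat (z k) ws - Matrix.vecMulVec (z k i) (z k i)))) ≤ 0 := by
  set Φ : (Fin N → ℝ) → ℝ := fun w => -(lambdaMin (infoMat z₁ w))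
  set ℓ := ∑ k, η k • (L k).comp (infoMatLinear (z k)).toContinuousLinearMap
  have hΦ : ConvexOn ℝ Set.univ Φ := convexOn_neg_lambdaMin_infoMat z₁
  have hΨ := (convexOn_sum_mul_comp_infoMat z η hφconv hη).subset (Set.subset_univ _)
    (convex_simplex N)
  refine isMinOn_iff.symm.trans <| (isMinOn_add_iff_exists_subgradient hΦ
    hΦ.locallyLipschitz.continuous hΨ (hasFDerivAt_sum_mul_comp_infoMat z η hdiff) hws).trans ?_
  refine (exists_congr fun g =>
    and_congr_right' (forall_mem_simplex_nonneg_iff (g + ℓ).toLinearMap ws)).trans ?_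
  refine (exists_continuousLinearMap_iff_exists_dotp (P := fun F =>
    (∀ y, F (y - ws) ≤ Φ y - Φ ws) ∧
      ∀ i, 0 ≤ F (_root_.stdBasis i - ws) + ℓ (_root_.stdBasis i - ws))).trans ?_
  refine exists_congr fun g => and_congr Iff.rfl (forall_congr' fun i => ?_)
  have hg : dotp g (_root_.stdBasis i - ws) = -dotp g (ws - _root_.stdBasis i) := by
    simp [dotp, mul_sub]
  rw [hg, sum_smul_comp_infoMat_apply_stdBasis_sub z η L ws i]
  simp only [hG]
  constructor <;> intro <;> linarith

/-- with `Φ₁(w) = −λ_min(I₁(w))` and, for `k = 2, …, K` (here indexed by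
`Fin m`, `m = K − 1 ≥ 1`), `Φ_k(w) = φ_k(I_k(w))` with `φ_k` convex and differentiable at
`I_k(w*)` with gradient matrix `G k`, and multipliers `η_k ≥ 0`:  `w*` minimizes
`Φ₁ + Σ_k η_k Φ_k` over the simplex iff there is `g ∈ ∂Φ₁(w*)` with
`gᵀ(w* − e_i) + Σ_k η_k d_k(i, w*) ≤ 0` for all `i`. -/
theorem stmt12 {N q₁ m : ℕ} (hm : 1 ≤ m)
    (z₁ : Fin N → Fin q₁ → ℝ)
    (q : Fin m → ℕ)
    (z : ∀ k : Fin m, Fin N → Fin (q k) → ℝ)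
    (φ : ∀ k : Fin m, Matrix (Fin (q k)) (Fin (q k)) ℝ → ℝ)
    (hφconv : ∀ k, ConvexOn ℝ Set.univ (φ k))
    (ws : Fin N → ℝ) (hws : ws ∈ simplex N)
    (L : ∀ k : Fin m, Matrix (Fin (q k)) (Fin (q k)) ℝ →L[ℝ] ℝ)
    (hdiff : ∀ k, HasFDerivAt (φ k) (L k) (infoMat (z k) ws))
    (G : ∀ k : Fin m, Matrix (Fin (q k)) (Fin (q k)) ℝ)
    (hG : ∀ k, ∀ H : Matrix (Fin (q k)) (Fin (q k)) ℝ, L k H = Matrix.trace ((G k)ᵀ * H))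
    (η : Fin m → ℝ) (hη : ∀ k, 0 ≤ η k) :
    (∀ w ∈ simplex N,
        -(lambdaMin (infoMat z₁ ws)) + (∑ k, η k * φ k (infoMat (z k) ws)) ≤
          -(lambdaMin (infoMat z₁ w)) + ∑ k, η k * φ k (infoMat (z k) w)) ↔
      ∃ g ∈ subdiff (fun w => -(lambdaMin (infoMat z₁ w))) ws,
        ∀ i : Fin N,
          dotp g (ws - stdBasis i) +
            (∑ k, η k * Matrix.trace ((G k)ᵀ *
              (infoMat (z k) ws - Matrix.vecMulVec (z k i) (z k i)))) ≤ 0 :=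
  stmt12_general z₁ q z φ hφconv ws hws L hdiff G hG η hη
end
end
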